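/- Let 𝒜 be an abelian category and 𝒲 a full additive subcategory closed under isomorphisms and under direct summands. Let M ∈ 𝒢(𝒲) and let T →^α W →^γ M be a Tate 𝒲-resolution of M. If H_0(Hom_𝒜(T,M)) = 0 (i.e. Êxt^0_𝒲(M,M) = 0), then M ∈ 𝒲. -/

import Mathlib

universe w v u

open CategoryTheory CategoryTheory.Limits

namespace TateCat

variable (𝒜 : Type u) [Category.{v} 𝒜] [Abelian 𝒜]

abbrev CatCx := ChainComplex 𝒜 ℤ

variable {𝒜}

/-- `Hom(P, T)` is exact at position `n`. -/
def HomIntoExactAt (T : CatCx 𝒜) (P : 𝒜) (n : ℤ) : Prop :=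
  ∀ f : P ⟶ T.X n, f ≫ T.d n (n - 1) = 0 →
    ∃ g : P ⟶ T.X (n + 1), g ≫ T.d (n + 1) n = f

/-- `Hom(T, N)` is exact at position `n`. -/
def HomFromExactAt (T : CatCx 𝒜) (N : 𝒜) (n : ℤ) : Prop :=
  ∀ f : T.X n ⟶ N, T.d (n + 1) n ≫ f = 0 →
    ∃ g : T.X (n - 1) ⟶ N, T.d n (n - 1) ≫ g = f

/-- `T` is a totally `𝒲`-acyclic complex. -/
def IsTotallyAcyclic (𝒲 : 𝒜 → Prop) (T : CatCx 𝒜) : Prop :=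
  (∀ n : ℤ, 𝒲 (T.X n)) ∧ (∀ n : ℤ, T.ExactAt n) ∧
    (∀ W : 𝒜, 𝒲 W → ∀ n : ℤ, HomIntoExactAt T W n ∧ HomFromExactAt T W n)

/-- The class `𝒢(𝒲)`. -/
def GClass (𝒲 : 𝒜 → Prop) : 𝒜 → Prop := fun M =>
  ∃ T : CatCx 𝒜, IsTotallyAcyclic 𝒲 T ∧ Nonempty (cokernel (T.d 1 0) ≅ M)

/-- The dual class: objects arising as `Ker ∂₀` of a totally `𝒱`-acyclic complex. -/
def GCoClass (𝒱 : 𝒜 → Prop) : 𝒜 → Prop := fun M =>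
  ∃ S : CatCx 𝒜, IsTotallyAcyclic 𝒱 S ∧ Nonempty (kernel (S.d 0 (-1)) ≅ M)

/-- `W`, with the augmentation `ε`, is a resolution of `M`. -/
structure IsRes (W : CatCx 𝒜) (M : 𝒜) (ε : W.X 0 ⟶ M) : Prop where
  zero_neg : ∀ n : ℤ, n < 0 → IsZero (W.X n)
  epi : Epi ε
  comp_zero : W.d 1 0 ≫ ε = 0
  exact0 : (ShortComplex.mk (W.d 1 0) ε comp_zero).Exact
  exact : ∀ n : ℤ, 1 ≤ n → W.ExactAt n

/-- `W → M` is a proper `𝒲`-resolution. -/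
def IsProperRes (𝒲 : 𝒜 → Prop) (W : CatCx 𝒜) (M : 𝒜) (ε : W.X 0 ⟶ M) : Prop :=
  IsRes W M ε ∧ (∀ n : ℤ, 0 ≤ n → 𝒲 (W.X n)) ∧
    ∀ P : 𝒜, 𝒲 P →
      (∀ f : P ⟶ M, ∃ g : P ⟶ W.X 0, g ≫ ε = f) ∧
      (∀ f : P ⟶ W.X 0, f ≫ ε = 0 → ∃ g : P ⟶ W.X 1, g ≫ W.d 1 0 = f) ∧
      (∀ n : ℤ, 1 ≤ n → HomIntoExactAt W P n)

/-- A Tate `𝒲`-resolution of `M`. -/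
def IsTateRes (𝒲 : 𝒜 → Prop) (T W : CatCx 𝒜) (M : 𝒜) (ε : W.X 0 ⟶ M)
    (α : T ⟶ W) : Prop :=
  IsTotallyAcyclic 𝒲 T ∧ IsProperRes 𝒲 W M ε ∧
    ∃ N₀ : ℤ, ∀ n : ℤ, N₀ ≤ n → IsIso (α.f n)

def HasTateRes (𝒲 : 𝒜 → Prop) (M : 𝒜) : Prop :=
  ∃ (T W : CatCx 𝒜) (ε : W.X 0 ⟶ M) (α : T ⟶ W), IsTateRes 𝒲 T W M ε α

def HasResLen (𝒳 : 𝒜 → Prop) (M : 𝒜) (m : ℕ) : Prop :=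
  ∃ (W : CatCx 𝒜) (ε : W.X 0 ⟶ M), IsRes W M ε ∧
    (∀ n : ℤ, 0 ≤ n → n ≤ (m : ℤ) → 𝒳 (W.X n)) ∧
    (∀ n : ℤ, (m : ℤ) < n → IsZero (W.X n))

def FinDim (𝒳 : 𝒜 → Prop) (M : 𝒜) : Prop := ∃ m : ℕ, HasResLen 𝒳 M m

/-- `V`, with the augmentation `η`, is a coresolution of `M` (in degrees `≤ 0`). -/
structure IsCores (V : CatCx 𝒜) (M : 𝒜) (η : M ⟶ V.X 0) : Prop where
  zero_pos : ∀ n : ℤ, 0 < n → IsZero (V.X n)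
  mono : Mono η
  comp_zero : η ≫ V.d 0 (-1) = 0
  exact0 : (ShortComplex.mk η (V.d 0 (-1)) comp_zero).Exact
  exact : ∀ n : ℤ, n ≤ -1 → V.ExactAt n

def IsProperCores (𝒱 : 𝒜 → Prop) (V : CatCx 𝒜) (M : 𝒜) (η : M ⟶ V.X 0) : Prop :=
  IsCores V M η ∧ (∀ n : ℤ, n ≤ 0 → 𝒱 (V.X n)) ∧
    ∀ I : 𝒜, 𝒱 I →
      (∀ f : M ⟶ I, ∃ g : V.X 0 ⟶ I, η ≫ g = f) ∧
      (∀ f : V.X 0 ⟶ I, η ≫ f = 0 → ∃ g : V.X (-1) ⟶ I, V.d 0 (-1) ≫ g = f) ∧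
      (∀ n : ℤ, n ≤ -1 → HomFromExactAt V I n)

/-- A Tate `𝒱`-coresolution of `N`. -/
def IsTateCores (𝒱 : 𝒜 → Prop) (V S : CatCx 𝒜) (N : 𝒜) (η : N ⟶ V.X 0)
    (β : V ⟶ S) : Prop :=
  IsProperCores 𝒱 V N η ∧ IsTotallyAcyclic 𝒱 S ∧
    ∃ N₀ : ℤ, ∀ n : ℤ, n ≤ N₀ → IsIso (β.f n)

def HasCoresLen (𝒳 : 𝒜 → Prop) (M : 𝒜) (m : ℕ) : Prop :=
  ∃ (V : CatCx 𝒜) (η : M ⟶ V.X 0), IsCores V M η ∧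
    (∀ n : ℤ, -(m : ℤ) ≤ n → n ≤ 0 → 𝒳 (V.X n)) ∧
    (∀ n : ℤ, n < -(m : ℤ) → IsZero (V.X n))

def FinCodim (𝒳 : 𝒜 → Prop) (M : 𝒜) : Prop := ∃ m : ℕ, HasCoresLen 𝒳 M m

section Ext
variable [HasExt.{w} 𝒜]

/-- `Ext^i(X, Y) = 0` for all `i ≥ 1`. -/
def ExtPerp (X Y : 𝒜) : Prop := ∀ i : ℕ, 1 ≤ i → Subsingleton (Abelian.Ext.{w} X Y i)

end Ext

/-! Write `M = Coker(S₁ → S₀)` with `S` totally `𝒲`-acyclic, with projection `π : S₀ → M`.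
Since `W` is a proper `𝒲`-resolution, `π` lifts to a chain map `Λ : S≥0 → W`. Where `α` is
invertible, `Λ` factors through `T`; as `Hom(S, X)` is exact for `X ∈ 𝒲`, descending induction
extends this to a chain map `μ : S → T` down to degree `-1` together with a homotopy
`Λ ≃ μ ≫ α`. Hence `π ≡ μ₀ ≫ α₀ ≫ ε` modulo maps factoring through `∂₀ˢ`, and by the vanishing of
`Êxt⁰_𝒲(M, M)` the map `α₀ ≫ ε` factors through `∂₀ᵀ`, so `μ₀ ≫ α₀ ≫ ε` factors through `∂₀ˢ`.
Thus `π` factors through `∂₀ˢ = π ≫ j`, i.e. `j : M → S₋₁` is split mono, and `M` is a direct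
summand of `S₋₁ ∈ 𝒲`. -/

lemma HomFromExactAt.exists_d_comp_eq_of_succ {S : CatCx 𝒜} {N : 𝒜} {n : ℤ}
    (h : HomFromExactAt S N (n + 1)) (f : S.X (n + 1) ⟶ N)
    (hf : S.d (n + 1 + 1) (n + 1) ≫ f = 0) :
    ∃ g : S.X n ⟶ N, S.d (n + 1) n ≫ g = f := by
  have := h f hf
  rwa [add_sub_cancel_right] at this

lemma IsProperRes.exists_comparison {𝒲 : 𝒜 → Prop} {W : CatCx 𝒜} {M : 𝒜} {ε : W.X 0 ⟶ M}
    (hW : IsProperRes 𝒲 W M ε) {S : CatCx 𝒜} (hS : ∀ n : ℤ, 0 ≤ n → 𝒲 (S.X n))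
    {π : S.X 0 ⟶ M} (hπ : S.d 1 0 ≫ π = 0) (N : ℕ) :
    ∃ Λ : ∀ n, S.X n ⟶ W.X n, Λ 0 ≫ ε = π ∧
      ∀ n : ℤ, 0 ≤ n → n ≤ N → S.d (n + 1) n ≫ Λ n = Λ (n + 1) ≫ W.d (n + 1) n := by
  induction N with
  | zero =>
    obtain ⟨Λ₀, hΛ₀⟩ := (hW.2.2 _ (hS 0 le_rfl)).1 π
    obtain ⟨Λ₁, hΛ₁⟩ := (hW.2.2 _ (hS 1 zero_le_one)).2.1 (S.d 1 0 ≫ Λ₀)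
      (by rw [Category.assoc, hΛ₀, hπ])
    refine ⟨Function.update (Function.update 0 0 Λ₀) 1 Λ₁, ?_, fun n hn₀ hn => ?_⟩
    · rwa [Function.update_of_ne one_ne_zero.symm, Function.update_self]
    · obtain rfl : n = 0 := by push_cast at hn; omega
      rw [zero_add, Function.update_self, Function.update_of_ne one_ne_zero.symm,
        Function.update_self, hΛ₁]
  | succ N ih =>
    obtain ⟨Λ, hΛ₀, hΛ⟩ := ih
    obtain ⟨Λ', hΛ'⟩ := (hW.2.2 _ (hS (N + 1 + 1) (by positivity))).2.2 (N + 1)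
      (by omega) (S.d (N + 1 + 1) (N + 1) ≫ Λ (N + 1)) (by
        rw [add_sub_cancel_right, Category.assoc, ← hΛ N (by positivity) le_rfl,
          HomologicalComplex.d_comp_d_assoc, zero_comp])
    refine ⟨Function.update Λ (N + 1 + 1) Λ', ?_, fun n hn₀ hn => ?_⟩
    · rwa [Function.update_of_ne (by omega)]
    · rcases lt_or_eq_of_le hn with hn | rfl
      · rw [Function.update_of_ne (by push_cast at hn; omega),
          Function.update_of_ne (by push_cast at hn; omega)]
        exact hΛ n hn₀ (by push_cast at hn; omega)
      · push_cast
        rw [Function.update_self, Function.update_of_ne (by omega), hΛ']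

section Comparison

variable {S T W : CatCx 𝒜} (α : T ⟶ W) (Λ : ∀ n, S.X n ⟶ W.X n)

/-- `μ` is the lowest component of a chain map `S → T` in degrees `≥ n` (the cycle condition is
what lets it be extended one degree down), and `a`, `b` are the degree-`n` components of a
homotopy from `Λ` to its composite with `α`. -/
def FactorsUpToHomotopyAt (n : ℤ) : Prop :=
  ∃ (μ : S.X n ⟶ T.X n) (a : S.X (n - 1) ⟶ W.X n) (b : S.X n ⟶ W.X (n + 1)),
    S.d (n + 1) n ≫ μ ≫ T.d n (n - 1) = 0 ∧
      Λ n - μ ≫ α.f n = S.d n (n - 1) ≫ a + b ≫ W.d (n + 1) n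

variable {α Λ}

lemma factorsUpToHomotopyAt_of_isIso {n : ℤ} [IsIso (α.f n)] [IsIso (α.f (n + 1))]
    (hΛ : S.d (n + 1) n ≫ Λ n = Λ (n + 1) ≫ W.d (n + 1) n) :
    FactorsUpToHomotopyAt α Λ n := by
  refine ⟨Λ n ≫ inv (α.f n), 0, 0, ?_, by simp⟩
  have hα : W.d (n + 1) n ≫ inv (α.f n) = inv (α.f (n + 1)) ≫ T.d (n + 1) n := by
    rw [IsIso.eq_inv_comp, ← Category.assoc, α.comm, Category.assoc, IsIso.hom_inv_id,
      Category.comp_id]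
  rw [Category.assoc, reassoc_of% hΛ, reassoc_of% hα, HomologicalComplex.d_comp_d, comp_zero,
    comp_zero]

lemma FactorsUpToHomotopyAt.of_succ {n : ℤ} (hT : HomFromExactAt S (T.X n) (n + 1))
    (hW : HomFromExactAt S (W.X n) n)
    (hΛ : S.d (n + 1) n ≫ Λ n = Λ (n + 1) ≫ W.d (n + 1) n)
    (h : FactorsUpToHomotopyAt α Λ (n + 1)) : FactorsUpToHomotopyAt α Λ n := by
  rw [FactorsUpToHomotopyAt, add_sub_cancel_right] at h
  obtain ⟨m, a, b, hm, hab⟩ := h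
  obtain ⟨m', hm'⟩ := hT.exists_d_comp_eq_of_succ (m ≫ T.d (n + 1) n) (by simpa using hm)
  have hcycle : S.d (n + 1) n ≫ (Λ n - m' ≫ α.f n - a ≫ W.d (n + 1) n) =
      (Λ (n + 1) - m ≫ α.f (n + 1) - S.d (n + 1) n ≫ a) ≫ W.d (n + 1) n := by
    simp only [Preadditive.comp_sub, Preadditive.sub_comp, hΛ, reassoc_of% hm', α.comm,
      Category.assoc]
  obtain ⟨a', ha'⟩ := hW (Λ n - m' ≫ α.f n - a ≫ W.d (n + 1) n) (by
    rw [hcycle, sub_eq_of_eq_add' hab, Category.assoc, HomologicalComplex.d_comp_d, comp_zero])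
  refine ⟨m', a', a, by rw [reassoc_of% hm', HomologicalComplex.d_comp_d, comp_zero], ?_⟩
  rw [ha']
  abel

lemma FactorsUpToHomotopyAt.exists_d_comp_eq {M : 𝒜} {ε : W.X 0 ⟶ M} {π : S.X 0 ⟶ M}
    (h : FactorsUpToHomotopyAt α Λ 0) (hΛ : Λ 0 ≫ ε = π) (hε : W.d 1 0 ≫ ε = 0)
    (hS : HomFromExactAt S (T.X (-1)) 0) (hT : HomFromExactAt T M 0) :
    ∃ r : S.X (-1) ⟶ M, S.d 0 (-1) ≫ r = π := by
  rw [FactorsUpToHomotopyAt, zero_sub, zero_add] at h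
  obtain ⟨m, a, b, hm, hab⟩ := h
  obtain ⟨m', hm'⟩ : ∃ m' : S.X (-1) ⟶ T.X (-1), S.d 0 (-1) ≫ m' = m ≫ T.d 0 (-1) :=
    hS _ hm
  obtain ⟨g, hg⟩ : ∃ g : T.X (-1) ⟶ M, T.d 0 (-1) ≫ g = α.f 0 ≫ ε :=
    hT _ (by
      rw [← α.comm_assoc]
      show α.f 1 ≫ W.d 1 0 ≫ ε = 0
      rw [hε, comp_zero])
  refine ⟨a ≫ ε + m' ≫ g, ?_⟩
  calc S.d 0 (-1) ≫ (a ≫ ε + m' ≫ g)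
      = (m ≫ α.f 0 + (S.d 0 (-1) ≫ a + b ≫ W.d 1 0)) ≫ ε := by
        simp only [Preadditive.comp_add, Preadditive.add_comp, reassoc_of% hm', hg,
          Category.assoc, hε, comp_zero, add_zero]
        abel
    _ = π := by rw [← hab, add_sub_cancel, hΛ]

end Comparison

lemma exists_d_comp_eq_of_isTateRes {𝒲 : 𝒜 → Prop} {S T W : CatCx 𝒜} {M : 𝒜}
    {ε : W.X 0 ⟶ M} {α : T ⟶ W} {π : S.X 0 ⟶ M} (hS : IsTotallyAcyclic 𝒲 S)
    (hπ : S.d 1 0 ≫ π = 0) (h : IsTateRes 𝒲 T W M ε α) (hvanish : HomFromExactAt T M 0) :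
    ∃ r : S.X (-1) ⟶ M, S.d 0 (-1) ≫ r = π := by
  obtain ⟨hT, hW, N, hα⟩ := h
  have hSexact : ∀ X, 𝒲 X → ∀ n, HomFromExactAt S X n := fun X hX n => (hS.2.2 X hX n).2
  obtain ⟨Λ, hΛ₀, hΛ⟩ := hW.exists_comparison (fun n _ => hS.1 n) hπ N.toNat
  have hN : FactorsUpToHomotopyAt α Λ N.toNat := by
    have hαN := hα N.toNat (Int.self_le_toNat N)
    have hαN₁ := hα (N.toNat + 1) (by omega)
    exact factorsUpToHomotopyAt_of_isIso (hΛ _ (by positivity) le_rfl)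
  have h₀ : FactorsUpToHomotopyAt α Λ (0 : ℕ) := by
    refine Nat.decreasingInduction (motive := fun k _ => FactorsUpToHomotopyAt α Λ k)
      (fun k hk hsucc => ?_) hN (Nat.zero_le _)
    push_cast at hsucc
    exact hsucc.of_succ (hSexact _ (hT.1 _) _) (hSexact _ (hW.2.1 _ (by positivity)) _)
      (hΛ _ (by positivity) (by omega))
  exact h₀.exists_d_comp_eq hΛ₀ hW.1.comp_zero (hSexact _ (hT.1 _) _) hvanish

theorem mem_W_of_GW_and_tate_self_vanishing_general
    (𝒜 : Type u) [Category.{v} 𝒜] [Abelian 𝒜]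
    (𝒲 : 𝒜 → Prop)
    (h_summand : ∀ (W A B : 𝒜), 𝒲 W → Nonempty (W ≅ A ⊞ B) → 𝒲 A)
    (M : 𝒜) (hM : GClass 𝒲 M)
    (T W : CatCx 𝒜) (ε : W.X 0 ⟶ M) (α : T ⟶ W)
    (h : IsTateRes 𝒲 T W M ε α)
    (hvanish : HomFromExactAt T M 0) :
    𝒲 M := by
  obtain ⟨S, hS, ⟨e⟩⟩ := hM
  let π : S.X 0 ⟶ M := cokernel.π (S.d 1 0) ≫ e.hom
  let j : M ⟶ S.X (-1) := e.inv ≫ cokernel.desc _ (S.d 0 (-1)) (S.d_comp_d 1 0 (-1))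
  obtain ⟨r, hr⟩ := exists_d_comp_eq_of_isTateRes (π := π) hS (by simp [π]) h hvanish
  have hjr : j ≫ r = 𝟙 M := by
    rw [← cancel_epi π]
    simp [π, j, hr]
  exact h_summand _ M _ (hS.1 (-1)) ⟨(ShortComplex.Splitting.ofExactOfRetraction _
    (ShortComplex.cokernelSequence_exact j) r hjr inferInstance).isoBinaryBiproduct⟩

/-- Lemma 5.1: if `𝒲` is closed under direct summands, `M ∈ 𝒢(𝒲)` and
`Êxt⁰_𝒲(M, M) = 0` (i.e. `Hom(T, M)` is exact in degree `0` for a Tate `𝒲`-resolution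
`T → W → M`), then `M ∈ 𝒲`. -/
theorem mem_W_of_GW_and_tate_self_vanishing
    (𝒜 : Type u) [Category.{v} 𝒜] [Abelian 𝒜]
    (𝒲 : 𝒜 → Prop)
    (h_iso : ∀ A B : 𝒜, 𝒲 A → Nonempty (A ≅ B) → 𝒲 B)
    (h_zero : ∀ A : 𝒜, IsZero A → 𝒲 A)
    (h_biprod : ∀ A B : 𝒜, 𝒲 A → 𝒲 B → 𝒲 (A ⊞ B))
    (h_summand : ∀ (W A B : 𝒜), 𝒲 W → Nonempty (W ≅ A ⊞ B) → 𝒲 A)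
    (M : 𝒜) (hM : GClass 𝒲 M)
    (T W : CatCx 𝒜) (ε : W.X 0 ⟶ M) (α : T ⟶ W)
    (h : IsTateRes 𝒲 T W M ε α)
    (hvanish : HomFromExactAt T M 0) :
    𝒲 M :=
  mem_W_of_GW_and_tate_self_vanishing_general 𝒜 𝒲 h_summand M hM T W ε α h hvanish

end TateCat
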